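/- Let n ≥ 2 be an integer and λ, σ ∈ ℂ. For every smooth u on any open subset of ℝ^{n−1}, Σⱼ ∂²(P_σ u)/∂Yⱼ² = P_{σ−2}(Σⱼ ∂²u/∂Yⱼ²), i.e. the Euclidean Laplacian intertwines P_σ and P_{σ−2}: Δ_Y ∘ P_σ = P_{σ−2} ∘ Δ_Y. -/

import Mathlib

/-- `∂ⱼ` on functions on `ℝ^m`. -/
noncomputable def pd {m : ℕ} (j : Fin m) (u : (Fin m → ℝ) → ℂ) (Y : Fin m → ℝ) : ℂ :=
  fderiv ℝ u Y (Pi.single j 1)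

/-- The Euler vector field `E u (Y) = Σⱼ Yⱼ ∂ⱼ u (Y)`. -/
noncomputable def euler {m : ℕ} (u : (Fin m → ℝ) → ℂ) (Y : Fin m → ℝ) : ℂ :=
  ∑ j, (Y j : ℂ) * pd j u Y

/-- The Euclidean Laplacian `Δ u = Σⱼ ∂ⱼ² u`. -/
noncomputable def lap {m : ℕ} (u : (Fin m → ℝ) → ℂ) (Y : Fin m → ℝ) : ℂ :=
  ∑ j, pd j (pd j u) Y

/-- The normal operator family `P_σ u = −(E + (n−1−σ))((E − σ)u) + Δ_Y u − λ u`
acting on functions on `ℝ^{n−1}` (the real form of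
`(YD_Y − i(n−1−σ))(YD_Y + iσ) − Δ_Y − λ`). -/
noncomputable def Pop (n : ℕ) (lam σ : ℂ) (u : (Fin (n - 1) → ℝ) → ℂ)
    (Y : Fin (n - 1) → ℝ) : ℂ :=
  -(euler (fun Z => euler u Z - σ * u Z) Y
      + ((n : ℂ) - 1 - σ) * (euler u Y - σ * u Y))
    + lap u Y - lam * u Y

/-!
Since `[E, Δ] = -2Δ`, the Laplacian intertwines `E - τ` with `E - (τ - 2)`. Writing
`P_σ = Δ - λ - (E - (σ + 1 - n)) (E - σ)`, moving `Δ` through both factors shifts each of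
`σ + 1 - n` and `σ` by `-2`, which turns `P_σ` into `P_{σ-2}`.
-/

open Set Filter Topology
open scoped ContDiff

variable {m : ℕ} {f g : (Fin m → ℝ) → ℂ} {Y : Fin m → ℝ}

/-- The operator `E - τ`; the paper's factor `YD_Y + iσ` is `-i (E - σ)`. -/
noncomputable def eulerSub (τ : ℂ) (u : (Fin m → ℝ) → ℂ) (Y : Fin m → ℝ) : ℂ :=
  euler u Y - τ * u Y

theorem pd_congr (h : f =ᶠ[𝓝 Y] g) (j : Fin m) : pd j f Y = pd j g Y := by
  rw [pd, pd, h.fderiv_eq]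

theorem pd_add (hf : DifferentiableAt ℝ f Y) (hg : DifferentiableAt ℝ g Y) (j : Fin m) :
    pd j (fun Z => f Z + g Z) Y = pd j f Y + pd j g Y := by
  rw [pd, fderiv_fun_add hf hg]
  rfl

theorem pd_sub (hf : DifferentiableAt ℝ f Y) (hg : DifferentiableAt ℝ g Y) (j : Fin m) :
    pd j (fun Z => f Z - g Z) Y = pd j f Y - pd j g Y := by
  rw [pd, fderiv_fun_sub hf hg]
  rfl

theorem pd_const_mul (hf : DifferentiableAt ℝ f Y) (c : ℂ) (j : Fin m) :
    pd j (fun Z => c * f Z) Y = c * pd j f Y := by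
  rw [pd, fderiv_const_mul hf c]
  rfl

theorem pd_sum {ι : Type*} (s : Finset ι) {F : ι → (Fin m → ℝ) → ℂ}
    (hF : ∀ i ∈ s, DifferentiableAt ℝ (F i) Y) (j : Fin m) :
    pd j (fun Z => ∑ i ∈ s, F i Z) Y = ∑ i ∈ s, pd j (F i) Y := by
  rw [pd, fderiv_fun_sum hF, sum_apply]
  rfl

theorem pd_coord_mul (hf : DifferentiableAt ℝ f Y) (j k : Fin m) :
    pd j (fun Z => (Z k : ℂ) * f Z) Y = (if j = k then f Y else 0) + Y k * pd j f Y := by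
  have hcoord : fderiv ℝ (fun Z : Fin m → ℝ => (Z k : ℂ)) Y
      = Complex.ofRealCLM.comp (ContinuousLinearMap.proj k : (Fin m → ℝ) →L[ℝ] ℝ) :=
    (Complex.ofRealCLM.comp (ContinuousLinearMap.proj k : (Fin m → ℝ) →L[ℝ] ℝ)).fderiv
  rw [pd, fderiv_fun_mul (by fun_prop) hf, hcoord]
  rcases eq_or_ne j k with rfl | hjk
  · simp only [add_apply, smul_apply, smul_eq_mul, ContinuousLinearMap.comp_apply,
      ContinuousLinearMap.proj_apply, Pi.single_eq_same, Complex.ofRealCLM_apply,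
      Complex.ofReal_one, mul_one, ↓reduceIte, pd]
    ring
  · simp [pd, hjk, hjk.symm]

theorem euler_sum {ι : Type*} (s : Finset ι) {F : ι → (Fin m → ℝ) → ℂ}
    (hF : ∀ i ∈ s, DifferentiableAt ℝ (F i) Y) :
    euler (fun Z => ∑ i ∈ s, F i Z) Y = ∑ i ∈ s, euler (F i) Y := by
  simp only [euler, pd_sum s hF, Finset.mul_sum]
  exact Finset.sum_comm

section OpenSet

variable {U : Set (Fin m → ℝ)}

theorem ContDiffOn.pd (hf : ContDiffOn ℝ ∞ f U) (hU : IsOpen U) (j : Fin m) :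
    ContDiffOn ℝ ∞ (pd j f) U :=
  (ContinuousLinearMap.apply ℝ ℂ (Pi.single j 1 : Fin m → ℝ)).contDiff.comp_contDiffOn
    (hf.fderiv_of_isOpen hU (by simp))

theorem ContDiffOn.euler (hf : ContDiffOn ℝ ∞ f U) (hU : IsOpen U) :
    ContDiffOn ℝ ∞ (euler f) U :=
  ContDiffOn.sum fun j _ =>
    (Complex.ofRealCLM.contDiff.comp (contDiff_apply ℝ ℝ j)).contDiffOn.mul (hf.pd hU j)

theorem ContDiffOn.lap (hf : ContDiffOn ℝ ∞ f U) (hU : IsOpen U) :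
    ContDiffOn ℝ ∞ (lap f) U :=
  ContDiffOn.sum fun j _ => (hf.pd hU j).pd hU j

theorem ContDiffOn.eulerSub (hf : ContDiffOn ℝ ∞ f U) (hU : IsOpen U) (τ : ℂ) :
    ContDiffOn ℝ ∞ (eulerSub τ f) U :=
  (hf.euler hU).sub (contDiffOn_const.mul hf)

theorem ContDiffOn.differentiableAt_of_isOpen (hf : ContDiffOn ℝ ∞ f U) (hU : IsOpen U)
    (hY : Y ∈ U) : DifferentiableAt ℝ f Y :=
  (hf.contDiffAt (hU.mem_nhds hY)).differentiableAt (by simp)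

theorem Set.EqOn.pd (h : EqOn f g U) (hU : IsOpen U) (j : Fin m) :
    EqOn (pd j f) (pd j g) U := fun _ hY =>
  pd_congr (mem_of_superset (hU.mem_nhds hY) h) j

theorem Set.EqOn.euler (h : EqOn f g U) (hU : IsOpen U) : EqOn (euler f) (euler g) U :=
  fun _ hY => Finset.sum_congr rfl fun j _ => by rw [h.pd hU j hY]

theorem Set.EqOn.eulerSub (h : EqOn f g U) (hU : IsOpen U) (τ : ℂ) :
    EqOn (eulerSub τ f) (eulerSub τ g) U :=
  fun _ hY => congr_arg₂ (fun a b => a - τ * b) (h.euler hU hY) (h hY)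

variable (hU : IsOpen U)
include hU

theorem pd_pd_comm (hf : ContDiffOn ℝ ∞ f U) (hY : Y ∈ U) (j k : Fin m) :
    pd j (pd k f) Y = pd k (pd j f) Y := by
  have hf' : ContDiffAt ℝ ∞ f Y := hf.contDiffAt (hU.mem_nhds hY)
  have hpd : ∀ j k : Fin m,
      pd j (pd k f) Y = fderiv ℝ (fderiv ℝ f) Y (Pi.single j 1) (Pi.single k 1) := by
    intro j k
    rw [pd, show pd k f = fun Z => fderiv ℝ f Z (Pi.single k 1) from rfl,
      fderiv_clm_apply ((hf'.fderiv_right (m := ∞) (by simp)).differentiableAt (by simp))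
        (differentiableAt_const _)]
    simp
  rw [hpd, hpd]
  exact hf'.isSymmSndFDerivAt (by simpa using ENat.LEInfty.out) _ _

theorem pd_euler (hf : ContDiffOn ℝ ∞ f U) (j : Fin m) :
    EqOn (pd j (euler f)) (fun Z => pd j f Z + euler (pd j f) Z) U := by
  intro Y hY
  have hpd : ∀ k, DifferentiableAt ℝ (pd k f) Y := fun k =>
    (hf.pd hU k).differentiableAt_of_isOpen hU hY
  calc pd j (euler f) Y = ∑ k, pd j (fun Z => (Z k : ℂ) * pd k f Z) Y :=
        pd_sum _ (fun k _ => (by fun_prop : DifferentiableAt ℝ (fun Z => (Z k : ℂ)) Y).mul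
          (hpd k)) j
    _ = ∑ k, ((if j = k then pd k f Y else 0) + Y k * pd k (pd j f) Y) :=
        Finset.sum_congr rfl fun k _ => by rw [pd_coord_mul (hpd k), pd_pd_comm hU hf hY]
    _ = pd j f Y + euler (pd j f) Y := by simp [Finset.sum_add_distrib, euler]

theorem lap_sub (hf : ContDiffOn ℝ ∞ f U) (hg : ContDiffOn ℝ ∞ g U) (hY : Y ∈ U) :
    lap (fun Z => f Z - g Z) Y = lap f Y - lap g Y := by
  simp only [lap, ← Finset.sum_sub_distrib]
  refine Finset.sum_congr rfl fun j _ => ?_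
  have hpd : EqOn (pd j fun Z => f Z - g Z) (fun Z => pd j f Z - pd j g Z) U := fun Z hZ =>
    pd_sub (hf.differentiableAt_of_isOpen hU hZ) (hg.differentiableAt_of_isOpen hU hZ) j
  rw [hpd.pd hU j hY, pd_sub ((hf.pd hU j).differentiableAt_of_isOpen hU hY)
    ((hg.pd hU j).differentiableAt_of_isOpen hU hY) j]

theorem lap_const_mul (hf : ContDiffOn ℝ ∞ f U) (c : ℂ) (hY : Y ∈ U) :
    lap (fun Z => c * f Z) Y = c * lap f Y := by
  simp only [lap, Finset.mul_sum]
  refine Finset.sum_congr rfl fun j _ => ?_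
  have hpd : EqOn (pd j fun Z => c * f Z) (fun Z => c * pd j f Z) U := fun Z hZ =>
    pd_const_mul (hf.differentiableAt_of_isOpen hU hZ) c j
  rw [hpd.pd hU j hY, pd_const_mul ((hf.pd hU j).differentiableAt_of_isOpen hU hY) c j]

theorem lap_euler (hf : ContDiffOn ℝ ∞ f U) :
    EqOn (lap (euler f)) (fun Z => euler (lap f) Z + 2 * lap f Z) U := by
  intro Y hY
  have hterm : ∀ j, pd j (pd j (euler f)) Y
      = 2 * pd j (pd j f) Y + euler (pd j (pd j f)) Y := by
    intro j
    have hpd := hf.pd hU j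
    rw [(pd_euler hU hf j).pd hU j hY, pd_add (hpd.differentiableAt_of_isOpen hU hY)
      ((hpd.euler hU).differentiableAt_of_isOpen hU hY), pd_euler hU hpd j hY]
    ring
  have hsum : euler (lap f) Y = ∑ j, euler (pd j (pd j f)) Y :=
    euler_sum _ fun j _ => ((hf.pd hU j).pd hU j).differentiableAt_of_isOpen hU hY
  simp only [lap, hterm, Finset.sum_add_distrib, ← Finset.mul_sum]
  rw [hsum]
  ring

theorem lap_eulerSub (hf : ContDiffOn ℝ ∞ f U) (τ : ℂ) :
    EqOn (lap (eulerSub τ f)) (eulerSub (τ - 2) (lap f)) U := by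
  intro Y hY
  change lap (fun Z => euler f Z - τ * f Z) Y = _
  rw [lap_sub hU (hf.euler hU) (contDiffOn_const.mul hf) hY, lap_const_mul hU hf τ hY,
    lap_euler hU hf hY, eulerSub]
  ring

end OpenSet

theorem Pop_eq (n : ℕ) (lam σ : ℂ) (u : (Fin (n - 1) → ℝ) → ℂ) :
    Pop n lam σ u = fun Y => lap u Y - lam * u Y - eulerSub (σ + 1 - n) (eulerSub σ u) Y := by
  funext Y
  unfold Pop eulerSub
  ring

theorem stmt14_general (n : ℕ) (lam σ : ℂ)
    (U : Set (Fin (n - 1) → ℝ)) (hU : IsOpen U)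
    (u : (Fin (n - 1) → ℝ) → ℂ) (hu : ContDiffOn ℝ (⊤ : ℕ∞) u U) :
    ∀ Y ∈ U, lap (Pop n lam σ u) Y = Pop n lam (σ - 2) (lap u) Y := by
  intro Y hY
  have hw := hu.eulerSub hU σ
  rw [Pop_eq, Pop_eq,
    lap_sub hU ((hu.lap hU).sub (contDiffOn_const.mul hu)) (hw.eulerSub hU _) hY,
    lap_sub hU (hu.lap hU) (contDiffOn_const.mul hu) hY, lap_const_mul hU hu lam hY,
    lap_eulerSub hU hw _ hY, (lap_eulerSub hU hu σ).eulerSub hU _ hY,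
    show σ + 1 - n - 2 = σ - 2 + 1 - n by ring]

/-- the Euclidean Laplacian intertwines `P_σ` and `P_{σ−2}`:
`Δ_Y (P_σ u) = P_{σ−2} (Δ_Y u)` for every `u` smooth on any open subset `U ⊆ ℝ^{n−1}`,
at every point of `U`. -/
theorem stmt14 (n : ℕ) (hn : 2 ≤ n) (lam σ : ℂ)
    (U : Set (Fin (n - 1) → ℝ)) (hU : IsOpen U)
    (u : (Fin (n - 1) → ℝ) → ℂ) (hu : ContDiffOn ℝ (⊤ : ℕ∞) u U) :
    ∀ Y ∈ U, lap (Pop n lam σ u) Y = Pop n lam (σ - 2) (lap u) Y :=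
  stmt14_general n lam σ U hU u hu
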